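/- arXiv:2003.03397 — 4 statements merged into one kernel-verified Lean document; each statement's English description precedes it below -/
import Mathlib

section
/- Let U = [u_1,…,u_{d1}] ∈ ℝ^{d2×d1} and V = [v_1,…,v_{d1}] ∈ ℝ^{d0×d1}, let A^{(1)},…,A^{(n)} ∈ ℝ^{d2×d0} be fixed measurement matrices, let y_1,…,y_n ∈ ℝ, and let p ∈ [0,1). Let B be a random d1×d1 diagonal matrix whose diagonal entries are independent, each taking value 1/(1−p) with probability 1−p and 0 with probability p. Then (1/n)·Σ_{i=1}^n E_B[(y_i − ⟨U B Vᵀ, A^{(i)}⟩)²] = (1/n)·Σ_{i=1}^n (y_i − ⟨U Vᵀ, A^{(i)}⟩)² + (p/(1−p))·(1/n)·Σ_{i=1}^n Σ_{j=1}^{d1} (u_jᵀ A^{(i)} v_j)². -/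
/-!
Writing `B = diagonal β`, the dropped-out prediction is
`⟨U B Vᵀ, A⟩ = ∑ j, β j * (u_jᵀ A v_j)`, a sum of independent terms. Since `E β_j = 1`, its mean
is the full prediction `⟨U Vᵀ, A⟩`, so the expected squared residual is the squared residual of
the full model plus the variance of the sum, which is
`∑ j, (u_jᵀ A v_j)² * Var β_j = p / (1 - p) * ∑ j, (u_jᵀ A v_j)²`.
-/

open MeasureTheory Matrix

/-- The law of a single dropout mask entry: takes value `true` (kept) with
probability `1 - p` and `false` (dropped) with probability `p`. -/
noncomputable def dropMeasure (p : ℝ) (hp0 : 0 ≤ p) : Measure Bool :=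
  (PMF.bernoulli (Real.toNNReal (1 - p))
    (Real.toNNReal_le_one.mpr (by linarith))).toMeasure

open ProbabilityTheory

theorem Matrix.trace_transpose_mul_diagonal_mul {l m n R : Type*} [Fintype l] [Fintype m]
    [Fintype n] [DecidableEq m] [CommSemiring R]
    (U : Matrix l m R) (V : Matrix n m R) (A : Matrix l n R) (d : m → R) :
    trace ((U * diagonal d * Vᵀ)ᵀ * A)
      = ∑ j, d j * ((fun a => U a j) ⬝ᵥ A *ᵥ fun b => V b j) := by
  calc trace ((U * diagonal d * Vᵀ)ᵀ * A) = trace (diagonal d * (Uᵀ * (A * V))) := by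
        rw [transpose_mul, transpose_mul, diagonal_transpose, transpose_transpose,
          Matrix.mul_assoc, trace_mul_comm, Matrix.mul_assoc, Matrix.mul_assoc]
    _ = ∑ j, d j * (Uᵀ * (A * V)) j j := by simp only [trace, diag, diagonal_mul]

theorem ProbabilityTheory.integral_const_sub_sq_eq_sq_add_variance {Ω : Type*}
    {mΩ : MeasurableSpace Ω} {μ : Measure Ω} [IsProbabilityMeasure μ] {X : Ω → ℝ}
    (hX : MemLp X 2 μ) (y : ℝ) :
    ∫ ω, (y - X ω) ^ 2 ∂μ = (y - μ[X]) ^ 2 + Var[X; μ] := by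
  rw [← variance_const_sub hX.aestronglyMeasurable y,
    variance_eq_sub (X := fun ω => y - X ω) ((memLp_const y).sub hX),
    integral_sub (integrable_const y) (hX.integrable one_le_two), integral_const]
  simp

instance isProbabilityMeasure_dropMeasure (p : ℝ) (hp0 : 0 ≤ p) :
    IsProbabilityMeasure (dropMeasure p hp0) :=
  PMF.toMeasure.isProbabilityMeasure _

/-- The entry `B_jj` of the dropout matrix when the mask value at `j` is `b`. -/
noncomputable def dropoutScale (p : ℝ) (b : Bool) : ℝ := if b then (1 - p)⁻¹ else 0

section

variable {p : ℝ} (hp0 : 0 ≤ p)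

theorem integral_dropMeasure (hp1 : p ≤ 1) (f : Bool → ℝ) :
    ∫ b, f b ∂dropMeasure p hp0 = (1 - p) * f true + p * f false := by
  simp [dropMeasure, PMF.integral_eq_sum, PMF.bernoulli_apply, hp0, hp1]

theorem integral_dropoutScale (hp1 : p < 1) : ∫ b, dropoutScale p b ∂dropMeasure p hp0 = 1 := by
  rw [integral_dropMeasure hp0 hp1.le]
  simp only [dropoutScale, if_true, Bool.false_eq_true, if_false, mul_zero, add_zero]
  field_simp [(sub_pos.2 hp1).ne']

theorem variance_dropoutScale (hp1 : p < 1) :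
    Var[dropoutScale p; dropMeasure p hp0] = p / (1 - p) := by
  rw [variance_eq_sub .of_discrete, integral_dropoutScale hp0 hp1,
    integral_dropMeasure hp0 hp1.le]
  simp only [Pi.pow_apply, dropoutScale, if_true, Bool.false_eq_true, if_false]
  field_simp [(sub_pos.2 hp1).ne']
  ring

theorem integral_sq_sub_sum_dropoutScale_mul {ι : Type*} [Fintype ι] (hp1 : p < 1)
    (c : ι → ℝ) (y : ℝ) :
    ∫ ω, (y - ∑ j, dropoutScale p (ω j) * c j) ^ 2 ∂Measure.pi (fun _ : ι => dropMeasure p hp0)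
      = (y - ∑ j, c j) ^ 2 + p / (1 - p) * ∑ j, c j ^ 2 := by
  let S : (ι → Bool) → ℝ := ∑ j, fun ω => dropoutScale p (ω j) * c j
  have hmean : ∫ ω, S ω ∂Measure.pi (fun _ => dropMeasure p hp0) = ∑ j, c j := by
    simp only [S, Finset.sum_apply]
    rw [integral_finsetSum _ fun j _ => .of_finite]
    refine Finset.sum_congr rfl fun j _ => ?_
    rw [integral_mul_const, integral_comp_eval (μ := fun _ => dropMeasure p hp0) .of_discrete,
      integral_dropoutScale hp0 hp1, one_mul]
  have hvar : Var[S; Measure.pi fun _ => dropMeasure p hp0] = p / (1 - p) * ∑ j, c j ^ 2 := by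
    rw [variance_sum_pi (X := fun j b => dropoutScale p b * c j) fun _ => .of_discrete,
      Finset.mul_sum]
    refine Finset.sum_congr rfl fun j _ => ?_
    rw [variance_mul_const, variance_dropoutScale hp0 hp1, mul_comm]
  have h := integral_const_sub_sq_eq_sq_add_variance
    (μ := Measure.pi fun _ => dropMeasure p hp0) (X := S) .of_discrete y
  rw [hmean, hvar] at h
  simpa only [S, Finset.sum_apply] using h

end

/-- **Dropout objective for matrix sensing.**
The average over the random diagonal dropout matrix `B` (diagonal entries iid,
`1/(1-p)` w.p. `1-p` and `0` w.p. `p`) of the empirical risk equals the plain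
empirical risk plus `p/(1-p)` times the explicit regularizer
`(1/n) Σ_i Σ_j (u_jᵀ A^{(i)} v_j)²`. -/
theorem dropout_objective_matrix_sensing
    {d0 d1 d2 n : ℕ}
    (U : Matrix (Fin d2) (Fin d1) ℝ) (V : Matrix (Fin d0) (Fin d1) ℝ)
    (A : Fin n → Matrix (Fin d2) (Fin d0) ℝ) (y : Fin n → ℝ)
    (p : ℝ) (hp0 : 0 ≤ p) (hp1 : p < 1) :
    (1 / n : ℝ) * ∑ i : Fin n,
      ∫ ω : Fin d1 → Bool,
        (y i - Matrix.trace
          ((U * Matrix.diagonal (fun j => if ω j then (1 - p)⁻¹ else 0) * Vᵀ)ᵀ * A i)) ^ 2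
        ∂(Measure.pi fun _ : Fin d1 => dropMeasure p hp0)
    = (1 / n : ℝ) * ∑ i : Fin n, (y i - Matrix.trace ((U * Vᵀ)ᵀ * A i)) ^ 2
      + (p / (1 - p)) *
        ((1 / n : ℝ) * ∑ i : Fin n, ∑ j : Fin d1,
          ((fun a => U a j) ⬝ᵥ (A i).mulVec (fun b => V b j)) ^ 2) := by
  have hloss (i : Fin n) :
      ∫ ω : Fin d1 → Bool,
        (y i - trace ((U * diagonal (fun j => if ω j then (1 - p)⁻¹ else 0) * Vᵀ)ᵀ * A i)) ^ 2
        ∂(Measure.pi fun _ : Fin d1 => dropMeasure p hp0)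
      = (y i - trace ((U * Vᵀ)ᵀ * A i)) ^ 2
        + p / (1 - p) * ∑ j, ((fun a => U a j) ⬝ᵥ (A i).mulVec (fun b => V b j)) ^ 2 := by
    have hfull : U * Vᵀ = U * diagonal (fun _ : Fin d1 => (1 : ℝ)) * Vᵀ := by
      rw [diagonal_one, Matrix.mul_one]
    simp_rw [hfull, trace_transpose_mul_diagonal_mul, one_mul]
    exact integral_sq_sub_sum_dropoutScale_mul hp0 hp1 _ _
  simp_rw [hloss, Finset.sum_add_distrib, ← Finset.mul_sum]
  ring
end

section
/- Let p be a probability vector on [d2] and q a probability vector on [d0], and let A be a random d2×d0 indicator matrix equal to e_i e_kᵀ with probability p(i)q(k). Then for any U = [u_1,…,u_{d1}] ∈ ℝ^{d2×d1} and V = [v_1,…,v_{d1}] ∈ ℝ^{d0×d1}, one has Σ_{w=1}^{d1} E[(u_wᵀ A v_w)²] = Σ_{w=1}^{d1} ‖diag(√p) u_w‖²·‖diag(√q) v_w‖², and this quantity is at least (1/d1)·‖diag(√p) U Vᵀ diag(√q)‖_*². -/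
/-!
Let `w_i` be an orthonormal eigenbasis of `MᵀM`. Then the vectors `M w_i` are pairwise orthogonal
and the singular values of `M` are `‖M w_i‖ = ⟪u_i, M w_i⟫` with `u_i = M w_i / ‖M w_i‖`. If
`M = Σ_t a_t b_tᵀ`, this expands to `Σ_t ⟪u_i, a_t⟫ ⟪b_t, w_i⟫`; Cauchy–Schwarz in `i`, Bessel's
inequality for the `u_i` and Parseval for the `w_i` give `‖M‖_* ≤ Σ_t ‖a_t‖ ‖b_t‖`. For
`a_t = diag(√p) u_t`, `b_t = diag(√q) v_t` a second Cauchy–Schwarz over the `d1` summands yields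
the lower bound, while the identity is the computation `u_wᵀ e_i e_kᵀ v_w = U_{iw} V_{kw}`.
-/

open Matrix

/-- Nuclear norm (sum of singular values) of a real matrix: the sum of the
square roots of the eigenvalues of `Mᵀ M`. -/
noncomputable def nuclearNorm {d2 d0 : ℕ} (M : Matrix (Fin d2) (Fin d0) ℝ) : ℝ :=
  ∑ i, Real.sqrt ((Matrix.isHermitian_conjTranspose_mul_self M).eigenvalues i)

/-- `u_wᵀ A v_w` where `u_w`, `v_w` are the `w`-th columns of `U`, `V`. -/
noncomputable def quadForm {d0 d1 d2 : ℕ} (U : Matrix (Fin d2) (Fin d1) ℝ)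
    (V : Matrix (Fin d0) (Fin d1) ℝ) (w : Fin d1) (A : Matrix (Fin d2) (Fin d0) ℝ) : ℝ :=
  (fun a => U a w) ⬝ᵥ A.mulVec (fun b => V b w)

open scoped RealInnerProductSpace

section InnerProductSpace

variable {ι κ E F : Type*} [Fintype ι] [Fintype κ]
  [NormedAddCommGroup E] [InnerProductSpace ℝ E] [NormedAddCommGroup F] [InnerProductSpace ℝ F]

theorem sum_inner_sq_le_norm_sq {v : ι → E} (hv : Pairwise fun i j => ⟪v i, v j⟫ = 0)
    (hv1 : ∀ i, ‖v i‖ ≤ 1) (x : E) : ∑ i, ⟪v i, x⟫ ^ 2 ≤ ‖x‖ ^ 2 := by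
  set c : ι → ℝ := fun i => ⟪v i, x⟫
  set P : E := ∑ i, c i • v i
  have hxP : ⟪x, P⟫ = ∑ i, c i ^ 2 := by
    simp only [P, inner_sum, real_inner_smul_right, real_inner_comm x, c, sq]
  have hP : ‖P‖ ^ 2 ≤ ∑ i, c i ^ 2 := by
    have hvP : ∀ i, ⟪v i, P⟫ = c i * ‖v i‖ ^ 2 := fun i => by
      simp only [P, inner_sum, real_inner_smul_right]
      rw [Finset.sum_eq_single i (fun j _ hji => by rw [hv hji.symm, mul_zero]) (by simp),
        real_inner_self_eq_norm_sq]
    calc ‖P‖ ^ 2 = ∑ i, c i ^ 2 * ‖v i‖ ^ 2 := by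
          rw [← real_inner_self_eq_norm_sq]
          simp only [P, sum_inner, real_inner_smul_left, hvP, sq, mul_assoc]
      _ ≤ ∑ i, c i ^ 2 := Finset.sum_le_sum fun i _ =>
          mul_le_of_le_one_right (sq_nonneg _) (pow_le_one₀ (norm_nonneg _) (hv1 i))
  linarith [norm_sub_sq_real x P, sq_nonneg ‖x - P‖]

theorem norm_eq_inner_inv_norm_smul (y : F) : ‖y‖ = ⟪‖y‖⁻¹ • y, y⟫ := by
  rw [real_inner_smul_left, real_inner_self_eq_norm_sq]
  rcases eq_or_ne ‖y‖ 0 with h | h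
  · simp [h]
  · field_simp

theorem sum_norm_apply_le_sum_norm_mul_norm (T : E →ₗ[ℝ] F) (w : OrthonormalBasis κ ℝ E)
    (hTw : Pairwise fun i j => ⟪T (w i), T (w j)⟫ = 0) (a : ι → F) (b : ι → E)
    (hT : ∀ x, T x = ∑ t, ⟪b t, x⟫ • a t) :
    ∑ i, ‖T (w i)‖ ≤ ∑ t, ‖a t‖ * ‖b t‖ := by
  set u : κ → F := fun i => ‖T (w i)‖⁻¹ • T (w i)
  have hu : Pairwise fun i j => ⟪u i, u j⟫ = 0 := fun i j hij => by
    simp only [u, real_inner_smul_left, real_inner_smul_right, hTw hij, mul_zero]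
  calc ∑ i, ‖T (w i)‖ = ∑ i, ∑ t, ⟪u i, a t⟫ * ⟪b t, w i⟫ := by
        refine Finset.sum_congr rfl fun i _ => ?_
        calc ‖T (w i)‖ = ⟪u i, T (w i)⟫ := norm_eq_inner_inv_norm_smul _
          _ = ⟪u i, ∑ t, ⟪b t, w i⟫ • a t⟫ := by rw [← hT]
          _ = ∑ t, ⟪u i, a t⟫ * ⟪b t, w i⟫ := by
            simp only [inner_sum, real_inner_smul_right, mul_comm]
    _ = ∑ t, ∑ i, ⟪u i, a t⟫ * ⟪b t, w i⟫ := Finset.sum_comm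
    _ ≤ ∑ t, √(∑ i, ⟪u i, a t⟫ ^ 2) * √(∑ i, ⟪b t, w i⟫ ^ 2) :=
        Finset.sum_le_sum fun t _ => Real.sum_mul_le_sqrt_mul_sqrt _ _ _
    _ ≤ ∑ t, ‖a t‖ * ‖b t‖ := by
        gcongr with t
        · have hu1 : ∀ i, ‖u i‖ ≤ 1 := fun i =>
            mem_closedBall_zero_iff.mp (inv_norm_smul_mem_unitClosedBall _)
          exact Real.sqrt_le_iff.mpr ⟨norm_nonneg _, sum_inner_sq_le_norm_sq hu hu1 _⟩
        · exact Real.sqrt_le_iff.mpr ⟨norm_nonneg _, (w.sum_sq_inner_left (b t)).le⟩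

end InnerProductSpace

namespace Matrix

variable {m n : ℕ}

theorem inner_toEuclideanLin_eigenvectorBasis (M : Matrix (Fin m) (Fin n) ℝ) (i j : Fin n) :
    ⟪toEuclideanLin M ((isHermitian_conjTranspose_mul_self M).eigenvectorBasis i),
      toEuclideanLin M ((isHermitian_conjTranspose_mul_self M).eigenvectorBasis j)⟫ =
      if i = j then (isHermitian_conjTranspose_mul_self M).eigenvalues j else 0 := by
  set hM := isHermitian_conjTranspose_mul_self M
  rw [← LinearMap.adjoint_inner_right, ← toEuclideanLin_conjTranspose_eq_adjoint]
  have heig : toEuclideanLin Mᴴ (toEuclideanLin M (hM.eigenvectorBasis j)) =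
      hM.eigenvalues j • hM.eigenvectorBasis j := by
    ext1 k
    simpa [Matrix.mulVec_mulVec] using congrFun (hM.mulVec_eigenvectorBasis j) k
  rw [heig, real_inner_smul_right, hM.eigenvectorBasis.inner_eq_ite]
  split_ifs <;> simp

theorem nuclearNorm_eq_sum_norm_toEuclideanLin_eigenvectorBasis (M : Matrix (Fin m) (Fin n) ℝ) :
    nuclearNorm M =
      ∑ i, ‖toEuclideanLin M ((isHermitian_conjTranspose_mul_self M).eigenvectorBasis i)‖ := by
  refine Finset.sum_congr rfl fun i _ => ?_
  rw [← Real.sqrt_sq (norm_nonneg _), ← real_inner_self_eq_norm_sq,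
    inner_toEuclideanLin_eigenvectorBasis, if_pos rfl]

variable {ι : Type*} [Fintype ι]

theorem toEuclideanLin_mul_transpose_apply (A : Matrix (Fin m) ι ℝ) (B : Matrix (Fin n) ι ℝ)
    (x : EuclideanSpace ℝ (Fin n)) :
    toEuclideanLin (A * Bᵀ) x = ∑ t, ⟪WithLp.toLp 2 (Bᵀ t), x⟫ • WithLp.toLp 2 (Aᵀ t) := by
  ext i
  simp only [ofLp_toLpLin, toLin'_apply, ← mulVec_mulVec, EuclideanSpace.inner_eq_star_dotProduct,
    star_trivial, WithLp.ofLp_sum, WithLp.ofLp_smul, Finset.sum_apply, Pi.smul_apply,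
    transpose_apply, smul_eq_mul]
  refine Finset.sum_congr rfl fun t _ => ?_
  rw [mul_comm, dotProduct_comm]
  rfl

theorem nuclearNorm_mul_transpose_le (A : Matrix (Fin m) ι ℝ) (B : Matrix (Fin n) ι ℝ) :
    nuclearNorm (A * Bᵀ) ≤ ∑ t, √(∑ i, A i t ^ 2) * √(∑ k, B k t ^ 2) := by
  rw [nuclearNorm_eq_sum_norm_toEuclideanLin_eigenvectorBasis]
  refine (sum_norm_apply_le_sum_norm_mul_norm _ _
    (fun i j hij => (inner_toEuclideanLin_eigenvectorBasis _ i j).trans (if_neg hij)) _ _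
    (toEuclideanLin_mul_transpose_apply A B)).trans_eq ?_
  simp only [EuclideanSpace.norm_eq, transpose_apply, Real.norm_eq_abs, sq_abs]

theorem sq_nuclearNorm_mul_transpose_le (A : Matrix (Fin m) ι ℝ) (B : Matrix (Fin n) ι ℝ) :
    nuclearNorm (A * Bᵀ) ^ 2 ≤ Fintype.card ι * ∑ t, (∑ i, A i t ^ 2) * ∑ k, B k t ^ 2 := by
  have hN : 0 ≤ nuclearNorm (A * Bᵀ) := Finset.sum_nonneg fun i _ => Real.sqrt_nonneg _
  calc nuclearNorm (A * Bᵀ) ^ 2 ≤ (∑ t, √(∑ i, A i t ^ 2) * √(∑ k, B k t ^ 2)) ^ 2 :=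
        pow_le_pow_left₀ hN (nuclearNorm_mul_transpose_le A B) 2
    _ ≤ Fintype.card ι * ∑ t, (√(∑ i, A i t ^ 2) * √(∑ k, B k t ^ 2)) ^ 2 :=
        sq_sum_le_card_mul_sum_sq
    _ = Fintype.card ι * ∑ t, (∑ i, A i t ^ 2) * ∑ k, B k t ^ 2 := by
        simp only [mul_pow, Real.sq_sqrt (Finset.sum_nonneg fun _ _ => sq_nonneg _)]

end Matrix

theorem quadForm_single {d0 d1 d2 : ℕ} (U : Matrix (Fin d2) (Fin d1) ℝ)
    (V : Matrix (Fin d0) (Fin d1) ℝ) (w : Fin d1) (i : Fin d2) (k : Fin d0) :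
    quadForm U V w (single i k 1) = U i w * V k w := by
  rw [quadForm, single_mulVec, one_mul]
  exact dotProduct_single _ _ _

theorem sum_mul_sq_quadForm_single {d0 d1 d2 : ℕ} {p : Fin d2 → ℝ} (hp : ∀ i, 0 ≤ p i)
    {q : Fin d0 → ℝ} (hq : ∀ k, 0 ≤ q k) (U : Matrix (Fin d2) (Fin d1) ℝ)
    (V : Matrix (Fin d0) (Fin d1) ℝ) (w : Fin d1) :
    ∑ i, ∑ k, p i * q k * quadForm U V w (single i k 1) ^ 2 =
      (∑ i, (√(p i) * U i w) ^ 2) * ∑ k, (√(q k) * V k w) ^ 2 := by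
  rw [Finset.sum_mul_sum]
  refine Finset.sum_congr rfl fun i _ => Finset.sum_congr rfl fun k _ => ?_
  rw [quadForm_single, mul_pow, mul_pow, mul_pow, Real.sq_sqrt (hp i), Real.sq_sqrt (hq k)]
  ring

theorem expected_regularizer_eq_and_lower_bound_general
    {d0 d1 d2 : ℕ}
    (p : Fin d2 → ℝ) (hp : ∀ i, 0 ≤ p i)
    (q : Fin d0 → ℝ) (hq : ∀ k, 0 ≤ q k)
    (U : Matrix (Fin d2) (Fin d1) ℝ) (V : Matrix (Fin d0) (Fin d1) ℝ) :
    (∑ w : Fin d1, ∑ i : Fin d2, ∑ k : Fin d0,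
        p i * q k * (quadForm U V w (Matrix.single i k (1 : ℝ))) ^ 2
      = ∑ w : Fin d1,
          (∑ i : Fin d2, (Real.sqrt (p i) * U i w) ^ 2) *
          (∑ k : Fin d0, (Real.sqrt (q k) * V k w) ^ 2))
    ∧ (1 / d1 : ℝ) *
        (nuclearNorm (Matrix.diagonal (fun i => Real.sqrt (p i)) * (U * Vᵀ) *
          Matrix.diagonal (fun k => Real.sqrt (q k)))) ^ 2
      ≤ ∑ w : Fin d1, ∑ i : Fin d2, ∑ k : Fin d0,
          p i * q k * (quadForm U V w (Matrix.single i k (1 : ℝ))) ^ 2 := by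
  have hE := Fintype.sum_congr _ _ (sum_mul_sq_quadForm_single hp hq U V)
  have hM : diagonal (fun i => √(p i)) * (U * Vᵀ) * diagonal (fun k => √(q k)) =
      (diagonal (fun i => √(p i)) * U) * (diagonal (fun k => √(q k)) * V)ᵀ := by
    simp only [transpose_mul, diagonal_transpose, Matrix.mul_assoc]
  refine ⟨hE, ?_⟩
  rw [hE, one_div_mul_eq_div, hM]
  refine div_le_of_le_mul₀ (Nat.cast_nonneg _) (by positivity) ?_
  simpa [diagonal_mul, mul_comm] using sq_nuclearNorm_mul_transpose_le
    (diagonal (fun i => √(p i)) * U) (diagonal (fun k => √(q k)) * V)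

/-- For the random indicator matrix `A = e_i e_kᵀ` with probability `p(i) q(k)`,
`Σ_w E[(u_wᵀ A v_w)²] = Σ_w ‖diag(√p) u_w‖² ‖diag(√q) v_w‖²`, and this is at
least `(1/d1) ‖diag(√p) U Vᵀ diag(√q)‖_*²`. -/
theorem expected_regularizer_eq_and_lower_bound
    {d0 d1 d2 : ℕ}
    (p : Fin d2 → ℝ) (hp : ∀ i, 0 ≤ p i) (hp1 : ∑ i, p i = 1)
    (q : Fin d0 → ℝ) (hq : ∀ k, 0 ≤ q k) (hq1 : ∑ k, q k = 1)
    (U : Matrix (Fin d2) (Fin d1) ℝ) (V : Matrix (Fin d0) (Fin d1) ℝ) :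
    (∑ w : Fin d1, ∑ i : Fin d2, ∑ k : Fin d0,
        p i * q k * (quadForm U V w (Matrix.single i k (1 : ℝ))) ^ 2
      = ∑ w : Fin d1,
          (∑ i : Fin d2, (Real.sqrt (p i) * U i w) ^ 2) *
          (∑ k : Fin d0, (Real.sqrt (q k) * V k w) ^ 2))
    ∧ (1 / d1 : ℝ) *
        (nuclearNorm (Matrix.diagonal (fun i => Real.sqrt (p i)) * (U * Vᵀ) *
          Matrix.diagonal (fun k => Real.sqrt (q k)))) ^ 2
      ≤ ∑ w : Fin d1, ∑ i : Fin d2, ∑ k : Fin d0,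
          p i * q k * (quadForm U V w (Matrix.single i k (1 : ℝ))) ^ 2 :=
  expected_regularizer_eq_and_lower_bound_general p hp q hq U V
end

section
/- Let x be a random vector in ℝ^{d0} whose distribution is symmetric (x and −x have the same law) and isotropic (E[x xᵀ] = I). Then for any U = [u_1,…,u_{d1}] ∈ ℝ^{d2×d1}, V = [v_1,…,v_{d1}] ∈ ℝ^{d0×d1}, and any λ ≥ 0, E_x[ λ·Σ_{j=1}^{d1} ‖u_j‖²·σ(v_jᵀ x)² ] = (λ/2)·Σ_{i0=1}^{d0} Σ_{i1=1}^{d1} Σ_{i2=1}^{d2} U(i2,i1)²·V(i0,i1)², i.e., the expected dropout regularizer equals λ/2 times the squared ℓ2 path-norm of the network. -/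
open MeasureTheory Matrix

private lemma relu_sq_add (t : ℝ) : max t 0 ^ 2 + max (-t) 0 ^ 2 = t ^ 2 := by
  rcases le_total t 0 with h | h
  · rw [max_eq_right h, max_eq_left (neg_nonneg.mpr h)]; ring
  · rw [max_eq_left h, max_eq_right (neg_nonpos.mpr h)]; ring

private lemma sq_dot_expand {d0 : ℕ} (v : Fin d0 → ℝ) :
    (fun x : Fin d0 → ℝ => (v ⬝ᵥ x) ^ 2)
      = fun x => ∑ a, ∑ b, (v a * v b) * (x a * x b) := by
  funext x
  simp only [dotProduct, sq, Finset.sum_mul_sum]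
  refine Finset.sum_congr rfl fun a _ => Finset.sum_congr rfl fun b _ => by ring

private lemma int_sq {d0 : ℕ} (μ : Measure (Fin d0 → ℝ))
    (hint : ∀ a b : Fin d0, Integrable (fun x => x a * x b) μ)
    (v : Fin d0 → ℝ) : Integrable (fun x => (v ⬝ᵥ x) ^ 2) μ := by
  rw [sq_dot_expand]
  exact integrable_finset_sum _ fun a _ => integrable_finset_sum _ fun b _ =>
    ((hint a b).const_mul _)

private lemma cont_relu_sq {d0 : ℕ} (v : Fin d0 → ℝ) :
    Continuous fun x : Fin d0 → ℝ => max (v ⬝ᵥ x) 0 ^ 2 := by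
  have : Continuous fun x : Fin d0 → ℝ => v ⬝ᵥ x := by
    simp only [dotProduct]
    exact continuous_finset_sum _ fun a _ => (continuous_const.mul (continuous_apply a))
  exact (this.max continuous_const).pow 2

private lemma int_relu_sq {d0 : ℕ} (μ : Measure (Fin d0 → ℝ))
    (hint : ∀ a b : Fin d0, Integrable (fun x => x a * x b) μ)
    (v : Fin d0 → ℝ) : Integrable (fun x => max (v ⬝ᵥ x) 0 ^ 2) μ := by
  refine (int_sq μ hint v).mono' ((cont_relu_sq v).aestronglyMeasurable) ?_
  filter_upwards with x
  rw [Real.norm_eq_abs, abs_of_nonneg (by positivity)]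
  have : |max (v ⬝ᵥ x) 0| ≤ |v ⬝ᵥ x| := by
    rcases le_total (v ⬝ᵥ x) 0 with h | h
    · simp [max_eq_right h, abs_nonneg]
    · simp [max_eq_left h, le_abs_self]
  calc max (v ⬝ᵥ x) 0 ^ 2 = |max (v ⬝ᵥ x) 0| ^ 2 := (sq_abs _).symm
    _ ≤ |v ⬝ᵥ x| ^ 2 := by gcongr
    _ = (v ⬝ᵥ x) ^ 2 := sq_abs _

private lemma integral_relu_sq {d0 : ℕ} (μ : Measure (Fin d0 → ℝ)) [IsProbabilityMeasure μ]
    (hsymm : Measure.map (fun x => -x) μ = μ)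
    (hint : ∀ a b : Fin d0, Integrable (fun x => x a * x b) μ)
    (hiso : ∀ a b : Fin d0, ∫ x, x a * x b ∂μ = if a = b then (1 : ℝ) else 0)
    (v : Fin d0 → ℝ) :
    ∫ x, max (v ⬝ᵥ x) 0 ^ 2 ∂μ = (1 / 2) * ∑ a, v a ^ 2 := by
  have hmeas : Measurable fun x : Fin d0 → ℝ => (-x) := measurable_neg
  have hneg : ∫ x, max (v ⬝ᵥ x) 0 ^ 2 ∂μ = ∫ x, max (-(v ⬝ᵥ x)) 0 ^ 2 ∂μ := by
    conv_lhs => rw [← hsymm]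
    rw [integral_map hmeas.aemeasurable ((cont_relu_sq v).aestronglyMeasurable)]
    congr 1; funext x
    congr 2
    simp [dotProduct, Finset.sum_neg_distrib]
  have hsum : ∫ x, (v ⬝ᵥ x) ^ 2 ∂μ = ∑ a, v a ^ 2 := by
    rw [sq_dot_expand]
    rw [integral_finset_sum _ fun a _ => integrable_finset_sum _ fun b _ =>
      ((hint a b).const_mul _)]
    have : ∀ a : Fin d0, ∫ x, ∑ b, (v a * v b) * (x a * x b) ∂μ = v a ^ 2 := by
      intro a
      rw [integral_finset_sum _ fun b _ => ((hint a b).const_mul _)]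
      have : ∀ b : Fin d0, ∫ x, (v a * v b) * (x a * x b) ∂μ
          = (v a * v b) * if a = b then (1:ℝ) else 0 := by
        intro b; rw [integral_const_mul, hiso]
      simp only [this]
      rw [Finset.sum_eq_single a]
      · simp [sq]
      · intro b _ hb; simp [Ne.symm hb]
      · simp
    simp only [this]
  have key : (∫ x, max (v ⬝ᵥ x) 0 ^ 2 ∂μ) + (∫ x, max (-(v ⬝ᵥ x)) 0 ^ 2 ∂μ)
      = ∑ a, v a ^ 2 := by
    rw [← hsum, ← integral_add (int_relu_sq μ hint v)]
    · congr 1; funext x; exact relu_sq_add _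
    · have := int_relu_sq μ hint (-v)
      have hv : ∀ x : Fin d0 → ℝ, (-v) ⬝ᵥ x = -(v ⬝ᵥ x) := by
        intro x; simp [dotProduct, Finset.sum_neg_distrib]
      simpa [hv] using this
  rw [← hneg] at key
  linarith

/-- **Expected dropout regularizer equals the squared ℓ2 path-norm** for a
two-layer ReLU network under a symmetric isotropic input distribution:
`E_x[λ Σ_j ‖u_j‖² σ(v_jᵀ x)²] = (λ/2) Σ_{i0,i1,i2} U(i2,i1)² V(i0,i1)²`. -/
theorem expected_regularizer_eq_path_norm
    {d0 d1 d2 : ℕ} (μ : Measure (Fin d0 → ℝ)) [IsProbabilityMeasure μ]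
    (hsymm : Measure.map (fun x => -x) μ = μ)
    (hint : ∀ a b : Fin d0, Integrable (fun x => x a * x b) μ)
    (hiso : ∀ a b : Fin d0, ∫ x, x a * x b ∂μ = if a = b then (1 : ℝ) else 0)
    (U : Matrix (Fin d2) (Fin d1) ℝ) (V : Matrix (Fin d0) (Fin d1) ℝ)
    (lam : ℝ) (hlam : 0 ≤ lam) :
    ∫ x, lam * ∑ j : Fin d1,
        (∑ k : Fin d2, (U k j) ^ 2) * max ((fun b => V b j) ⬝ᵥ x) 0 ^ 2 ∂μ
      = (lam / 2) * ∑ i0 : Fin d0, ∑ i1 : Fin d1, ∑ i2 : Fin d2,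
          (U i2 i1) ^ 2 * (V i0 i1) ^ 2 := by
  rw [integral_const_mul]
  rw [integral_finset_sum _ fun j _ =>
    ((int_relu_sq μ hint (fun b => V b j)).const_mul _)]
  have : ∀ j : Fin d1, ∫ x, (∑ k : Fin d2, (U k j) ^ 2) * max ((fun b => V b j) ⬝ᵥ x) 0 ^ 2 ∂μ
      = (∑ k : Fin d2, (U k j) ^ 2) * ((1/2) * ∑ a, V a j ^ 2) := by
    intro j
    rw [integral_const_mul, integral_relu_sq μ hsymm hint hiso]
  simp only [this]
  rw [Finset.sum_comm]
  rw [Finset.mul_sum, Finset.mul_sum]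
  refine Finset.sum_congr rfl fun j _ => ?_
  have h : ∑ x : Fin d0, ∑ i2 : Fin d2, U i2 j ^ 2 * V x j ^ 2
      = (∑ i2 : Fin d2, U i2 j ^ 2) * (∑ x : Fin d0, V x j ^ 2) := by
    rw [Finset.sum_comm, ← Finset.sum_mul_sum]
  rw [h]; ring
end

section
/- Let x be a random vector in ℝ^{d0} with second moment matrix C = E[x xᵀ], and suppose the distribution of x is β-retentive for some β ∈ (0,1/2]. Fix α > 0 and let F_α be the class of two-layer ReLU networks f_{u,V}(x) = Σ_{i=1}^{d1} u_i σ(v_iᵀ x) with Σ_{i=1}^{d1} |u_i|·√(E[σ(v_iᵀx)²]) ≤ α. Then for any sample x_1,…,x_n ∈ ℝ^{d0} lying in the column space of C, the empirical Rademacher complexity satisfies R_S(F_α) ≤ 2α·‖X‖_{C†}/(n·√β), where ‖X‖_{C†} = √(Σ_{i=1}^n x_iᵀ C† x_i) and C† is the Moore–Penrose pseudoinverse of C. -/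
open MeasureTheory Matrix

/-- Empirical Rademacher complexity of a class `F` of real-valued functions
with respect to the sample `x₁, …, xₙ`:
`E_σ sup_{f ∈ F} (1/n) Σ_i σ_i f(x_i)` with iid uniform signs `σ_i ∈ {±1}`. -/
noncomputable def radS {X : Type*} {n : ℕ} (F : Set (X → ℝ)) (x : Fin n → X) : ℝ :=
  ((2 : ℝ) ^ n)⁻¹ * ∑ s : Fin n → Bool,
    sSup ((fun f : X → ℝ =>
      (n : ℝ)⁻¹ * ∑ i, (if s i then (1 : ℝ) else -1) * f (x i)) '' F)

/-- Moore–Penrose pseudoinverse, via its characterizing identities. -/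
noncomputable def pinv {m k : ℕ} (M : Matrix (Fin m) (Fin k) ℝ) :
    Matrix (Fin k) (Fin m) ℝ :=
  by classical exact
    if h : ∃ N : Matrix (Fin k) (Fin m) ℝ,
        M * N * M = M ∧ N * M * N = N ∧ (M * N)ᵀ = M * N ∧ (N * M)ᵀ = N * M
    then h.choose else 0

/-- Second moment matrix `C = E[x xᵀ]` of a distribution `μ` on `ℝ^{d0}`. -/
noncomputable def secondMoment {d0 : ℕ} (μ : Measure (Fin d0 → ℝ)) :
    Matrix (Fin d0) (Fin d0) ℝ :=
  Matrix.of fun a b => ∫ x, x a * x b ∂μ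

/-- The class `F_α` of two-layer ReLU networks
`x ↦ Σ_i u_i σ(v_iᵀ x)` with `Σ_i |u_i| √(E_μ[σ(v_iᵀ x)²]) ≤ α`. -/
noncomputable def Falpha {d0 : ℕ} (d1 : ℕ) (μ : Measure (Fin d0 → ℝ)) (α : ℝ) :
    Set ((Fin d0 → ℝ) → ℝ) :=
  {f | ∃ (u : Fin d1 → ℝ) (V : Fin d1 → Fin d0 → ℝ),
    f = (fun x => ∑ i, u i * max (V i ⬝ᵥ x) 0) ∧
    ∑ i, |u i| * Real.sqrt (∫ x, max (V i ⬝ᵥ x) 0 ^ 2 ∂μ) ≤ α}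

/-!
A network in `F_α` is a combination `Σ uₚ σ(vₚᵀx)` of total weight `Σ |uₚ| ‖σ(vₚᵀx)‖ ≤ α`, so
its correlation with a sign pattern `s` on the sample is at most `α` times that of the best
normalised single unit, for `s` or `-s`. Averaged over `s`, the Ledoux–Talagrand contraction
removes the ReLU, leaving `sup_{‖σ(vᵀx)‖ ≤ 1} vᵀ C (Σ sⱼ zⱼ)` where `xⱼ = C zⱼ`. Cauchy–Schwarz
for `C` and `β`-retentiveness (`β vᵀCv ≤ ‖σ(vᵀx)‖²`) bound it by `√(wᵀCw) / √β` with
`w = Σ sⱼ zⱼ`. Cauchy–Schwarz over sign patterns and their orthogonality turn the average of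
`√(wᵀCw)` into at most `√(Σ zⱼᵀ C zⱼ) = ‖X‖_{C†}`.
-/

open Finset Function

namespace Matrix

theorem exists_moorePenrose_of_isHermitian {m : ℕ} {A : Matrix (Fin m) (Fin m) ℝ}
    (hA : A.IsHermitian) : ∃ N : Matrix (Fin m) (Fin m) ℝ,
      A * N * A = A ∧ N * A * N = N ∧ (A * N)ᵀ = A * N ∧ (N * A)ᵀ = N * A := by
  have hcont (f : ℝ → ℝ) : ContinuousOn f (spectrum ℝ A) :=
    A.finite_real_spectrum.continuousOn f
  have hmul (f g : ℝ → ℝ) : cfc f A * cfc g A = cfc (fun x => f x * g x) A :=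
    (cfc_mul f g A (hcont f) (hcont g)).symm
  have hid : cfc (fun x => x) A = A := cfc_id' ℝ A hA
  have hmul_left (g : ℝ → ℝ) : A * cfc g A = cfc (fun x => x * g x) A := by rw [← hmul, hid]
  have hmul_right (f : ℝ → ℝ) : cfc f A * A = cfc (fun x => f x * x) A := by rw [← hmul, hid]
  have htranspose (f : ℝ → ℝ) : (cfc f A)ᵀ = cfc f A := by
    rw [← conjTranspose_eq_transpose_of_trivial]
    exact cfc_predicate f A
  have hinv (x : ℝ) : x * x⁻¹ * x = x := by by_cases hx : x = 0 <;> simp [hx]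
  have hinv' (x : ℝ) : x⁻¹ * x * x⁻¹ = x⁻¹ := by by_cases hx : x = 0 <;> simp [hx]
  refine ⟨cfc (fun x : ℝ => x⁻¹) A, ?_, ?_, ?_, ?_⟩
  · rw [hmul_left, hmul_right]
    simp only [hinv, hid]
  · rw [hmul_right, hmul]
    simp only [hinv']
  · rw [hmul_left, htranspose]
  · rw [hmul_right, htranspose]

theorem mul_pinv_mul_of_isHermitian {m : ℕ} {A : Matrix (Fin m) (Fin m) ℝ}
    (hA : A.IsHermitian) : A * pinv A * A = A := by
  have h := exists_moorePenrose_of_isHermitian hA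
  rw [pinv, dif_pos h]
  exact h.choose_spec.1

theorem dotProduct_pinv_mulVec_mulVec {m : ℕ} {A : Matrix (Fin m) (Fin m) ℝ}
    (hA : A.IsHermitian) (z : Fin m → ℝ) :
    A *ᵥ z ⬝ᵥ pinv A *ᵥ (A *ᵥ z) = z ⬝ᵥ A *ᵥ z := by
  have hAT : Aᵀ = A := by rw [← conjTranspose_eq_transpose_of_trivial]; exact hA
  calc A *ᵥ z ⬝ᵥ pinv A *ᵥ (A *ᵥ z) = z ⬝ᵥ Aᵀ *ᵥ (pinv A *ᵥ (A *ᵥ z)) := by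
        rw [dotProduct_mulVec z, vecMul_transpose]
    _ = z ⬝ᵥ A *ᵥ z := by
        rw [mulVec_mulVec, mulVec_mulVec, hAT, mul_pinv_mul_of_isHermitian hA]

theorem PosSemidef.abs_dotProduct_mulVec_le {ι : Type*} [Fintype ι] {M : Matrix ι ι ℝ}
    (hM : M.PosSemidef) (v w : ι → ℝ) :
    |v ⬝ᵥ M *ᵥ w| ≤ √(v ⬝ᵥ M *ᵥ v) * √(w ⬝ᵥ M *ᵥ w) := by
  let := M.toSeminormedAddCommGroup hM
  let := M.toInnerProductSpace hM
  -- the inner product induced by `M` is `⟪v, w⟫ = (M *ᵥ w) ⬝ᵥ v`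
  have h : |(M *ᵥ w) ⬝ᵥ v| ≤ √((M *ᵥ v) ⬝ᵥ v) * √((M *ᵥ w) ⬝ᵥ w) :=
    (abs_real_inner_le_norm v w).trans_eq <| by
      rw [norm_eq_sqrt_re_inner (𝕜 := ℝ), norm_eq_sqrt_re_inner (𝕜 := ℝ)]; rfl
  simpa only [dotProduct_comm] using h

end Matrix

section SecondMoment

variable {d : ℕ} {μ : Measure (Fin d → ℝ)}

theorem integral_dotProduct_mul_dotProduct
    (hint : ∀ a b : Fin d, Integrable (fun x => x a * x b) μ) (v w : Fin d → ℝ) :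
    ∫ x, (v ⬝ᵥ x) * (w ⬝ᵥ x) ∂μ = v ⬝ᵥ secondMoment μ *ᵥ w := by
  have hexpand (x : Fin d → ℝ) :
      (v ⬝ᵥ x) * (w ⬝ᵥ x) = ∑ a, ∑ b, v a * w b * (x a * x b) := by
    simp only [dotProduct, sum_mul_sum]
    exact sum_congr rfl fun a _ => sum_congr rfl fun b _ => by ring
  simp_rw [hexpand]
  rw [integral_finsetSum _ fun a _ => integrable_finsetSum _ fun b _ => (hint a b).const_mul _]
  simp_rw [integral_finsetSum _ fun b _ => (hint _ b).const_mul _, integral_const_mul]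
  simp only [dotProduct, mulVec, secondMoment, of_apply, mul_sum]
  exact sum_congr rfl fun a _ => sum_congr rfl fun b _ => by ring

theorem posSemidef_secondMoment (hint : ∀ a b : Fin d, Integrable (fun x => x a * x b) μ) :
    (secondMoment μ).PosSemidef := by
  refine .of_dotProduct_mulVec_nonneg ?_ fun v => ?_
  · ext a b
    exact integral_congr_ae (.of_forall fun x => mul_comm _ _)
  · rw [star_trivial, ← integral_dotProduct_mul_dotProduct hint]
    exact integral_nonneg fun x => mul_self_nonneg _

end SecondMoment

section Retentive

variable {d : ℕ} {μ : Measure (Fin d → ℝ)} {β : ℝ}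

def IsRetentive (μ : Measure (Fin d → ℝ)) (β : ℝ) : Prop :=
  ∀ v : Fin d → ℝ, v ≠ 0 → β * ∫ x, (v ⬝ᵥ x) ^ 2 ∂μ ≤ ∫ x, max (v ⬝ᵥ x) 0 ^ 2 ∂μ

/-- `‖σ(vᵀx)‖_{L²(μ)}`, the weight of a hidden unit in the constraint defining `Falpha`. -/
noncomputable def reluNorm (μ : Measure (Fin d → ℝ)) (v : Fin d → ℝ) : ℝ :=
  √(∫ x, max (v ⬝ᵥ x) 0 ^ 2 ∂μ)

theorem reluNorm_nonneg (v : Fin d → ℝ) : 0 ≤ reluNorm μ v := Real.sqrt_nonneg _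

theorem reluNorm_smul {c : ℝ} (hc : 0 ≤ c) (v : Fin d → ℝ) :
    reluNorm μ (c • v) = c * reluNorm μ v := by
  have h (x : Fin d → ℝ) : max ((c • v) ⬝ᵥ x) 0 ^ 2 = c ^ 2 * max (v ⬝ᵥ x) 0 ^ 2 := by
    rw [smul_dotProduct, smul_eq_mul, ← mul_pow, mul_max_of_nonneg _ _ hc, mul_zero]
  simp only [reluNorm, h, integral_const_mul, Real.sqrt_mul (sq_nonneg c), Real.sqrt_sq hc]

theorem IsRetentive.sqrt_mul_sqrt_le_reluNorm (hret : IsRetentive μ β)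
    (hint : ∀ a b : Fin d, Integrable (fun x => x a * x b) μ) (v : Fin d → ℝ) :
    √β * √(v ⬝ᵥ secondMoment μ *ᵥ v) ≤ reluNorm μ v := by
  rcases eq_or_ne v 0 with rfl | hv
  · simp [reluNorm_nonneg]
  have hQ : 0 ≤ v ⬝ᵥ secondMoment μ *ᵥ v := by
    simpa using (posSemidef_secondMoment hint).dotProduct_mulVec_nonneg v
  rw [← Real.sqrt_mul' _ hQ, reluNorm, ← integral_dotProduct_mul_dotProduct hint]
  simpa only [sq] using Real.sqrt_le_sqrt (hret v hv)

theorem IsRetentive.abs_dotProduct_secondMoment_mulVec_le (hret : IsRetentive μ β)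
    (hint : ∀ a b : Fin d, Integrable (fun x => x a * x b) μ) (hβ : 0 < β) (v w : Fin d → ℝ) :
    |v ⬝ᵥ secondMoment μ *ᵥ w| ≤ reluNorm μ v * (√(w ⬝ᵥ secondMoment μ *ᵥ w) / √β) := by
  rw [← mul_div_assoc, le_div_iff₀ (Real.sqrt_pos.2 hβ)]
  calc |v ⬝ᵥ secondMoment μ *ᵥ w| * √β
      ≤ √(v ⬝ᵥ secondMoment μ *ᵥ v) * √(w ⬝ᵥ secondMoment μ *ᵥ w) * √β := by
        gcongr; exact (posSemidef_secondMoment hint).abs_dotProduct_mulVec_le v w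
    _ ≤ reluNorm μ v * √(w ⬝ᵥ secondMoment μ *ᵥ w) := by
        rw [mul_right_comm, mul_comm _ √β]
        gcongr
        exact hret.sqrt_mul_sqrt_le_reluNorm hint v

end Retentive

section Signs

def boolSign (b : Bool) : ℝ := if b then 1 else -1

@[simp] theorem boolSign_not (b : Bool) : boolSign (!b) = -boolSign b := by
  cases b <;> simp [boolSign]

@[simp] theorem abs_boolSign (b : Bool) : |boolSign b| = 1 := by cases b <;> simp [boolSign]

@[simp] theorem boolSign_mul_self (b : Bool) : boolSign b * boolSign b = 1 := by
  cases b <;> simp [boolSign]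

theorem sum_le_sum_of_add_comp_involutive {α : Type*} [Fintype α] {e : α → α}
    (he : Involutive e) {f g : α → ℝ} (h : ∀ s, f s + f (e s) ≤ g s + g (e s)) :
    ∑ s, f s ≤ ∑ s, g s := by
  have hf := Equiv.sum_comp (he.toPerm e) f
  have hg := Equiv.sum_comp (he.toPerm e) g
  simp only [Involutive.coe_toPerm] at hf hg
  have := sum_le_sum fun s (_ : s ∈ univ) => h s
  rw [sum_add_distrib, sum_add_distrib, hf, hg] at this
  linarith

theorem involutive_update_not {ι : Type*} [DecidableEq ι] (a : ι) :
    Involutive fun s : ι → Bool => update s a (!s a) := by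
  intro s
  ext j
  rcases eq_or_ne j a with rfl | hj <;> simp [*]

variable {ι : Type*} [Fintype ι] [DecidableEq ι]

theorem sum_comp_not (f : (ι → Bool) → ℝ) : ∑ s : ι → Bool, f (fun i => !s i) = ∑ s, f s :=
  Equiv.sum_comp (Equiv.piCongrRight fun _ => Equiv.boolNot) f

theorem sum_boolSign_mul_boolSign (j k : ι) :
    ∑ s : ι → Bool, boolSign (s j) * boolSign (s k) =
      if j = k then 2 ^ Fintype.card ι else 0 := by
  split_ifs with hjk
  · simp [hjk]
  -- flipping the `j`-th sign negates every term
  have h := Equiv.sum_comp ((involutive_update_not j).toPerm _)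
    fun s : ι → Bool => boolSign (s j) * boolSign (s k)
  simp only [Involutive.coe_toPerm, update_self, update_of_ne (Ne.symm hjk), boolSign_not,
    neg_mul, sum_neg_distrib] at h
  linarith

theorem sum_signedSum_dotProduct_mulVec {κ : Type*} [Fintype κ] (M : Matrix κ κ ℝ)
    (z : ι → κ → ℝ) :
    ∑ s : ι → Bool, (∑ j, boolSign (s j) • z j) ⬝ᵥ M *ᵥ (∑ j, boolSign (s j) • z j) =
      2 ^ Fintype.card ι * ∑ j, z j ⬝ᵥ M *ᵥ z j := by
  calc _ = ∑ k, ∑ j, (∑ s : ι → Bool, boolSign (s j) * boolSign (s k)) * (z j ⬝ᵥ M *ᵥ z k) := by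
        simp only [mulVec_sum, mulVec_smul, dotProduct_sum, sum_dotProduct, dotProduct_smul,
          smul_dotProduct, smul_eq_mul, sum_mul, mul_sum]
        rw [sum_comm]
        refine sum_congr rfl fun k _ => ?_
        rw [sum_comm]
        exact sum_congr rfl fun j _ => sum_congr rfl fun s _ => by ring
    _ = _ := by simp [sum_boolSign_mul_boolSign, mul_sum]

end Signs

section Contraction

variable {ι V : Type*} [Fintype ι]

theorem bddAbove_range_sum_boolSign_mul {f : ι → V → ℝ} {c : ι → ℝ}
    (hf : ∀ j v, |f j v| ≤ c j) (s : ι → Bool) :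
    BddAbove (Set.range fun v => ∑ j, boolSign (s j) * f j v) := by
  refine ⟨∑ j, c j, Set.forall_mem_range.2 fun v => sum_le_sum fun j _ => ?_⟩
  calc boolSign (s j) * f j v ≤ |boolSign (s j) * f j v| := le_abs_self _
    _ = |f j v| := by rw [abs_mul, abs_boolSign, one_mul]
    _ ≤ c j := hf j v

variable [Nonempty V] {φ : ℝ → ℝ}

theorem iSup_add_iSup_le_of_lipschitzWith (hφ : LipschitzWith 1 φ) {G t : V → ℝ} {ε : ℝ}
    (hε : |ε| = 1) (h₁ : BddAbove (Set.range fun v => G v + ε * t v))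
    (h₂ : BddAbove (Set.range fun v => G v - ε * t v)) :
    (⨆ v, G v + ε * φ (t v)) + (⨆ v, G v - ε * φ (t v)) ≤
      (⨆ v, G v + ε * t v) + (⨆ v, G v - ε * t v) := by
  refine ciSup_add_ciSup_le fun v w => ?_
  have hlip : ε * (φ (t v) - φ (t w)) ≤ |ε * (t v - t w)| := by
    rw [abs_mul, hε, one_mul]
    refine (le_abs_self _).trans ?_
    rw [abs_mul, hε, one_mul]
    simpa [Real.dist_eq] using hφ.dist_le_mul (t v) (t w)
  rcases abs_cases (ε * (t v - t w)) with ⟨h, -⟩ | ⟨h, -⟩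
  · calc _ ≤ (G v + ε * t v) + (G w - ε * t w) := by linarith
      _ ≤ _ := add_le_add (le_ciSup h₁ v) (le_ciSup h₂ w)
  · calc _ ≤ (G w + ε * t w) + (G v - ε * t v) := by linarith
      _ ≤ _ := add_le_add (le_ciSup h₁ w) (le_ciSup h₂ v)

variable [DecidableEq ι]

/-- Pairing each sign pattern with the one that differs at `a` reduces the contraction of the
`a`-th coordinate to `iSup_add_iSup_le_of_lipschitzWith`. -/
theorem sum_iSup_update_le (hφ : LipschitzWith 1 φ) (a : ι) {f : ι → V → ℝ}
    (hf : ∀ s : ι → Bool, BddAbove (Set.range fun v => ∑ j, boolSign (s j) * f j v)) :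
    ∑ s : ι → Bool, ⨆ v, ∑ j, boolSign (s j) * update f a (fun v => φ (f a v)) j v ≤
      ∑ s : ι → Bool, ⨆ v, ∑ j, boolSign (s j) * f j v := by
  refine sum_le_sum_of_add_comp_involutive (involutive_update_not a) fun s => ?_
  set G : V → ℝ := fun v => ∑ j ∈ univ.erase a, boolSign (s j) * f j v
  have hsplit (s' : ι → Bool) (hs' : ∀ j ≠ a, s' j = s j) (g : ι → V → ℝ)
      (hg : ∀ j ≠ a, g j = f j) (v : V) :
      ∑ j, boolSign (s' j) * g j v = G v + boolSign (s' a) * g a v := by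
    rw [← add_sum_erase _ _ (mem_univ a), add_comm]
    congr 1
    exact sum_congr rfl fun j hj => by rw [hs' j (ne_of_mem_erase hj), hg j (ne_of_mem_erase hj)]
  have hflip : ∀ j ≠ a, update s a (!s a) j = s j := fun j hj => update_of_ne hj _ _
  have hupd : ∀ j ≠ a, update f a (fun v => φ (f a v)) j = f j := fun j hj => update_of_ne hj _ _
  have e₁ (v : V) : ∑ j, boolSign (s j) * update f a (fun v => φ (f a v)) j v =
      G v + boolSign (s a) * φ (f a v) := by
    rw [hsplit s (fun _ _ => rfl) _ hupd, update_self]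
  have e₂ (v : V) : ∑ j, boolSign (update s a (!s a) j) * update f a (fun v => φ (f a v)) j v =
      G v - boolSign (s a) * φ (f a v) := by
    rw [hsplit _ hflip _ hupd, update_self, update_self, boolSign_not, neg_mul, sub_eq_add_neg]
  have e₃ (v : V) : ∑ j, boolSign (s j) * f j v = G v + boolSign (s a) * f a v :=
    hsplit s (fun _ _ => rfl) f (fun _ _ => rfl) v
  have e₄ (v : V) : ∑ j, boolSign (update s a (!s a) j) * f j v =
      G v - boolSign (s a) * f a v := by
    rw [hsplit _ hflip f (fun _ _ => rfl), update_self, boolSign_not, neg_mul, sub_eq_add_neg]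
  have h₁ := hf s
  have h₂ := hf (update s a (!s a))
  simp only [e₁, e₂, e₃, e₄] at h₁ h₂ ⊢
  exact iSup_add_iSup_le_of_lipschitzWith hφ (abs_boolSign _) h₁ h₂

/-- The Ledoux–Talagrand contraction inequality, for sums over sign patterns. -/
theorem sum_iSup_comp_le (hφ : LipschitzWith 1 φ) {t : ι → V → ℝ} {c : ι → ℝ}
    (ht : ∀ j v, |t j v| ≤ c j) :
    ∑ s : ι → Bool, ⨆ v, ∑ j, boolSign (s j) * φ (t j v) ≤
      ∑ s : ι → Bool, ⨆ v, ∑ j, boolSign (s j) * t j v := by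
  let ψ (S : Finset ι) (j : ι) (v : V) : ℝ := if j ∈ S then t j v else φ (t j v)
  have hφt (x : ℝ) : |φ x| ≤ |φ 0| + |x| := by
    have := hφ.dist_le_mul x 0
    simp only [Real.dist_eq, NNReal.coe_one, one_mul, sub_zero] at this
    linarith [abs_sub_abs_le_abs_sub (φ x) (φ 0)]
  have hψ (S : Finset ι) (j : ι) (v : V) : |ψ S j v| ≤ |φ 0| + c j := by
    by_cases hj : j ∈ S
    · simp only [ψ, if_pos hj]; linarith [abs_nonneg (φ 0), ht j v]
    · simp only [ψ, if_neg hj]; linarith [hφt (t j v), ht j v]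
  have hstep (S : Finset ι) : ∑ s : ι → Bool, ⨆ v, ∑ j, boolSign (s j) * ψ ∅ j v ≤
      ∑ s : ι → Bool, ⨆ v, ∑ j, boolSign (s j) * ψ S j v := by
    induction S using Finset.induction_on with
    | empty => exact le_rfl
    | insert a S ha ih =>
      have hψS : ψ S = update (ψ (insert a S)) a (fun v => φ (ψ (insert a S) a v)) := by
        ext j v
        rcases eq_or_ne j a with rfl | hj
        · simp [ψ, ha]
        · simp [ψ, hj]
      refine ih.trans ?_
      rw [hψS]
      exact sum_iSup_update_le hφ a (bddAbove_range_sum_boolSign_mul (hψ _))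
  simpa [ψ] using hstep univ

end Contraction

section ReluNetworks

variable {d : ℕ} {ι : Type*} {μ : Measure (Fin d → ℝ)} {x : ι → Fin d → ℝ} {c : ι → ℝ}

def reluUnitBall (μ : Measure (Fin d → ℝ)) : Set (Fin d → ℝ) := {v | reluNorm μ v ≤ 1}

theorem zero_mem_reluUnitBall : (0 : Fin d → ℝ) ∈ reluUnitBall μ := by
  simp [reluUnitBall, reluNorm]

instance : Nonempty (reluUnitBall μ) := ⟨⟨0, zero_mem_reluUnitBall⟩⟩

theorem abs_dotProduct_le_of_mem_reluUnitBall (hx : ∀ v i, |v ⬝ᵥ x i| ≤ reluNorm μ v * c i)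
    {v : Fin d → ℝ} (hv : v ∈ reluUnitBall μ) (i : ι) : |v ⬝ᵥ x i| ≤ |c i| :=
  calc |v ⬝ᵥ x i| ≤ reluNorm μ v * |c i| :=
        (hx v i).trans <| mul_le_mul_of_nonneg_left (le_abs_self _) (reluNorm_nonneg v)
    _ ≤ |c i| := mul_le_of_le_one_left (abs_nonneg _) hv

variable [Fintype ι]

noncomputable def reluSup (μ : Measure (Fin d → ℝ)) (x : ι → Fin d → ℝ) (s : ι → Bool) : ℝ :=
  ⨆ v : reluUnitBall μ, ∑ i, boolSign (s i) * max ((v : Fin d → ℝ) ⬝ᵥ x i) 0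

theorem bddAbove_range_sum_boolSign_mul_relu (hx : ∀ v i, |v ⬝ᵥ x i| ≤ reluNorm μ v * c i)
    (s : ι → Bool) : BddAbove (Set.range fun v : reluUnitBall μ =>
      ∑ i, boolSign (s i) * max ((v : Fin d → ℝ) ⬝ᵥ x i) 0) :=
  bddAbove_range_sum_boolSign_mul (fun i v => (abs_max_le_max_abs_abs.trans_eq (by simp)).trans
    (abs_dotProduct_le_of_mem_reluUnitBall hx v.2 i)) s

theorem reluSup_nonneg (hx : ∀ v i, |v ⬝ᵥ x i| ≤ reluNorm μ v * c i) (s : ι → Bool) :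
    0 ≤ reluSup μ x s :=
  le_ciSup_of_le (bddAbove_range_sum_boolSign_mul_relu hx s) ⟨0, zero_mem_reluUnitBall⟩
    (by simp)

theorem abs_sum_boolSign_mul_relu_le (hx : ∀ v i, |v ⬝ᵥ x i| ≤ reluNorm μ v * c i)
    (s : ι → Bool) (v : Fin d → ℝ) :
    |∑ i, boolSign (s i) * max (v ⬝ᵥ x i) 0| ≤
      reluNorm μ v * (reluSup μ x s + reluSup μ x fun i => !s i) := by
  rcases (reluNorm_nonneg (μ := μ) v).eq_or_lt with hr | hr
  · have h0 (i : ι) : v ⬝ᵥ x i = 0 := abs_nonpos_iff.1 <| by simpa [← hr] using hx v i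
    simp [h0, ← hr]
  set r := reluNorm μ v
  set g := ∑ i, boolSign (s i) * max (v ⬝ᵥ x i) 0
  have hmem : r⁻¹ • v ∈ reluUnitBall μ := by
    simp [reluUnitBall, r, reluNorm_smul (inv_nonneg.2 hr.le), inv_mul_cancel₀ hr.ne']
  have hscale (s' : ι → Bool) : ∑ i, boolSign (s' i) * max ((r⁻¹ • v) ⬝ᵥ x i) 0 =
      r⁻¹ * ∑ i, boolSign (s' i) * max (v ⬝ᵥ x i) 0 := by
    simp only [smul_dotProduct, smul_eq_mul, mul_sum]
    refine sum_congr rfl fun i _ => ?_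
    rw [← mul_zero r⁻¹, ← mul_max_of_nonneg _ _ (inv_nonneg.2 hr.le), mul_zero]
    ring
  have h₁ : r⁻¹ * g ≤ reluSup μ x s :=
    (hscale s).symm.trans_le (le_ciSup (bddAbove_range_sum_boolSign_mul_relu hx s) ⟨_, hmem⟩)
  have h₂ : -(r⁻¹ * g) ≤ reluSup μ x fun i => !s i :=
    calc -(r⁻¹ * g) = r⁻¹ * ∑ i, boolSign (!s i) * max (v ⬝ᵥ x i) 0 := by simp [g]
      _ ≤ _ := (hscale _).symm.trans_le
        (le_ciSup (bddAbove_range_sum_boolSign_mul_relu hx fun i => !s i) ⟨_, hmem⟩)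
  rw [inv_mul_le_iff₀ hr] at h₁
  rw [← mul_neg, inv_mul_le_iff₀ hr] at h₂
  have := mul_nonneg hr.le (reluSup_nonneg hx s)
  have := mul_nonneg hr.le (reluSup_nonneg hx fun i => !s i)
  rw [mul_add, abs_le]
  constructor <;> linarith

end ReluNetworks

theorem sSup_image_Falpha_le {d d1 n : ℕ} {μ : Measure (Fin d → ℝ)} (x : Fin n → Fin d → ℝ)
    {α K : ℝ} (hα : 0 ≤ α) (hK : 0 ≤ K) (s : Fin n → Bool)
    (h : ∀ v, |∑ i, boolSign (s i) * max (v ⬝ᵥ x i) 0| ≤ reluNorm μ v * K) :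
    sSup ((fun f : (Fin d → ℝ) → ℝ =>
        (n : ℝ)⁻¹ * ∑ i, (if s i then (1 : ℝ) else -1) * f (x i)) '' Falpha d1 μ α) ≤
      (n : ℝ)⁻¹ * (α * K) := by
  refine Real.sSup_le ?_ (by positivity)
  rintro _ ⟨_, ⟨u, V, rfl, hu⟩, rfl⟩
  refine mul_le_mul_of_nonneg_left ?_ (by positivity)
  calc ∑ i, boolSign (s i) * ∑ p, u p * max (V p ⬝ᵥ x i) 0
      = ∑ p, u p * ∑ i, boolSign (s i) * max (V p ⬝ᵥ x i) 0 := by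
        simp only [mul_sum]
        rw [sum_comm]
        exact sum_congr rfl fun p _ => sum_congr rfl fun i _ => by ring
    _ ≤ ∑ p, |u p| * (reluNorm μ (V p) * K) := by
        refine sum_le_sum fun p _ => (le_abs_self _).trans ?_
        rw [abs_mul]
        exact mul_le_mul_of_nonneg_left (h (V p)) (abs_nonneg _)
    _ = (∑ p, |u p| * reluNorm μ (V p)) * K := by simp only [sum_mul, mul_assoc]
    _ ≤ α * K := by gcongr; exact hu

theorem Real.sum_sqrt_le_sqrt_card_mul_sqrt_sum {α : Type*} [Fintype α] {f : α → ℝ}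
    (hf : ∀ s, 0 ≤ f s) : ∑ s, √(f s) ≤ √(Fintype.card α) * √(∑ s, f s) := by
  simpa using Real.sum_sqrt_mul_sqrt_le univ (f := fun _ => 1) (fun _ => zero_le_one) hf

theorem IsRetentive.sum_reluSup_le {d : ℕ} {ι : Type*} [Fintype ι] [DecidableEq ι]
    {μ : Measure (Fin d → ℝ)} {β : ℝ} (hret : IsRetentive μ β)
    (hint : ∀ a b : Fin d, Integrable (fun x => x a * x b) μ) (hβ : 0 < β)
    {x z : ι → Fin d → ℝ} (hz : ∀ i, secondMoment μ *ᵥ z i = x i) :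
    ∑ s : ι → Bool, reluSup μ x s ≤
      2 ^ Fintype.card ι * √(∑ i, z i ⬝ᵥ secondMoment μ *ᵥ z i) / √β := by
  set C := secondMoment μ
  let W (s : ι → Bool) : Fin d → ℝ := ∑ j, boolSign (s j) • z j
  have hx (v : Fin d → ℝ) (i : ι) : |v ⬝ᵥ x i| ≤ reluNorm μ v * (√(z i ⬝ᵥ C *ᵥ z i) / √β) := by
    rw [← hz]; exact hret.abs_dotProduct_secondMoment_mulVec_le hint hβ v (z i)
  have hlin (s : ι → Bool) :
      ⨆ v : reluUnitBall μ, ∑ i, boolSign (s i) * ((v : Fin d → ℝ) ⬝ᵥ x i) ≤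
        √(W s ⬝ᵥ C *ᵥ W s) / √β := by
    refine ciSup_le fun v => ?_
    have hW : ∑ i, boolSign (s i) * ((v : Fin d → ℝ) ⬝ᵥ x i) = v ⬝ᵥ C *ᵥ W s := by
      simp [W, ← hz, mulVec_sum, mulVec_smul, dotProduct_sum, dotProduct_smul]
    rw [hW]
    calc _ ≤ reluNorm μ v * (√(W s ⬝ᵥ C *ᵥ W s) / √β) :=
          (le_abs_self _).trans (hret.abs_dotProduct_secondMoment_mulVec_le hint hβ v (W s))
      _ ≤ _ := mul_le_of_le_one_left (by positivity) v.2
  have hcs := Real.sum_sqrt_le_sqrt_card_mul_sqrt_sum fun s =>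
    by simpa using (posSemidef_secondMoment hint).dotProduct_mulVec_nonneg (W s)
  calc ∑ s : ι → Bool, reluSup μ x s
      ≤ ∑ s : ι → Bool, ⨆ v : reluUnitBall μ, ∑ i, boolSign (s i) * ((v : Fin d → ℝ) ⬝ᵥ x i) :=
        sum_iSup_comp_le (LipschitzWith.id.max_const 0)
          fun i v => abs_dotProduct_le_of_mem_reluUnitBall hx v.2 i
    _ ≤ ∑ s : ι → Bool, √(W s ⬝ᵥ C *ᵥ W s) / √β := sum_le_sum fun s _ => hlin s
    _ ≤ √(2 ^ Fintype.card ι) * √(∑ s : ι → Bool, W s ⬝ᵥ C *ᵥ W s) / √β := by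
        rw [← sum_div]; gcongr; simpa using hcs
    _ = _ := by
        rw [sum_signedSum_dotProduct_mulVec, Real.sqrt_mul (by positivity), ← mul_assoc,
          Real.mul_self_sqrt (by positivity)]

theorem rademacher_bound_dropout_class_general
    {d0 d1 n : ℕ} (μ : Measure (Fin d0 → ℝ))
    (hint : ∀ a b : Fin d0, Integrable (fun x => x a * x b) μ)
    (β : ℝ) (hβ : β ∈ Set.Ioc (0 : ℝ) (1 / 2))
    (hret : ∀ v : Fin d0 → ℝ, v ≠ 0 →
      β * ∫ x, (v ⬝ᵥ x) ^ 2 ∂μ ≤ ∫ x, max (v ⬝ᵥ x) 0 ^ 2 ∂μ)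
    (α : ℝ) (hα : 0 < α)
    (x : Fin n → Fin d0 → ℝ)
    (hx : ∀ i, ∃ z : Fin d0 → ℝ, (secondMoment μ).mulVec z = x i) :
    radS (Falpha d1 μ α) x ≤
      2 * α * Real.sqrt (∑ i, x i ⬝ᵥ (pinv (secondMoment μ)).mulVec (x i))
        / (n * Real.sqrt β) := by
  choose z hz using hx
  have hret : IsRetentive μ β := hret
  set T := ∑ i, z i ⬝ᵥ secondMoment μ *ᵥ z i
  have hT : ∑ i, x i ⬝ᵥ pinv (secondMoment μ) *ᵥ x i = T := by
    simp only [← hz, dotProduct_pinv_mulVec_mulVec (posSemidef_secondMoment hint).isHermitian, T]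
  have hbound (v : Fin d0 → ℝ) (i : Fin n) :
      |v ⬝ᵥ x i| ≤ reluNorm μ v * (√(z i ⬝ᵥ secondMoment μ *ᵥ z i) / √β) := by
    rw [← hz]; exact hret.abs_dotProduct_secondMoment_mulVec_le hint hβ.1 v (z i)
  calc radS (Falpha d1 μ α) x
      ≤ (2 ^ n)⁻¹ * ∑ s : Fin n → Bool,
          (n : ℝ)⁻¹ * (α * (reluSup μ x s + reluSup μ x fun i => !s i)) := by
        refine mul_le_mul_of_nonneg_left (sum_le_sum fun s _ => ?_) (by positivity)
        exact sSup_image_Falpha_le x hα.le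
          (add_nonneg (reluSup_nonneg hbound s) (reluSup_nonneg hbound _)) s
          (abs_sum_boolSign_mul_relu_le hbound s)
    _ = (2 ^ n)⁻¹ * (n : ℝ)⁻¹ * α * 2 * ∑ s : Fin n → Bool, reluSup μ x s := by
        rw [← mul_sum, ← mul_sum, sum_add_distrib, sum_comp_not (reluSup μ x)]
        ring
    _ ≤ (2 ^ n)⁻¹ * (n : ℝ)⁻¹ * α * 2 * (2 ^ n * √T / √β) := by
        gcongr
        simpa using hret.sum_reluSup_le hint hβ.1 hz
    _ = 2 * α * √(∑ i, x i ⬝ᵥ pinv (secondMoment μ) *ᵥ x i) / (n * √β) := by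
        rw [hT]
        field_simp

/-- **Empirical Rademacher complexity bound for dropout classes.**
If the input distribution is `β`-retentive with second moment matrix `C`, then
for any sample lying in the column space of `C`,
`R_S(F_α) ≤ 2 α ‖X‖_{C†} / (n √β)`. -/
theorem rademacher_bound_dropout_class
    {d0 d1 n : ℕ} (μ : Measure (Fin d0 → ℝ)) [IsProbabilityMeasure μ]
    (hint : ∀ a b : Fin d0, Integrable (fun x => x a * x b) μ)
    (β : ℝ) (hβ : β ∈ Set.Ioc (0 : ℝ) (1 / 2))
    (hret : ∀ v : Fin d0 → ℝ, v ≠ 0 →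
      β * ∫ x, (v ⬝ᵥ x) ^ 2 ∂μ ≤ ∫ x, max (v ⬝ᵥ x) 0 ^ 2 ∂μ)
    (α : ℝ) (hα : 0 < α)
    (x : Fin n → Fin d0 → ℝ)
    (hx : ∀ i, ∃ z : Fin d0 → ℝ, (secondMoment μ).mulVec z = x i) :
    radS (Falpha d1 μ α) x ≤
      2 * α * Real.sqrt (∑ i, x i ⬝ᵥ (pinv (secondMoment μ)).mulVec (x i))
        / (n * Real.sqrt β) :=
  rademacher_bound_dropout_class_general μ hint β hβ hret α hα x hx
end
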